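/- Let θ = (θ_1,…,θ_e) be a residue permutation. For a ∈ [0,e−1], let (φ_a^1,…,φ_a^{a+1}) be the subsequence of (θ_{e−a}, θ_{e−a}−1, θ_{e−a}−2, …, θ_{e−a}−e+1) (entries taken mod e) consisting of those residues equal to some θ_b with b ≥ e−a. Then a (θ,a)-ribbon — the ribbon with a+1 rows whose j-th row consists of the consecutive residues φ_a^{j+1}+1, φ_a^{j+1}+2, …, φ_a^j (mod e) for j ∈ [1,a+1], with the convention φ_a^{a+2} := φ_a^1 — has exactly e nodes and content δ = α_0 + α_1 + ⋯ + α_{e-1}; moreover the (θ,a)-ribbons for a = 0,1,…,e−1 have pairwise distinct shapes (distinct numbers of rows). -/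

import Mathlib

/-!
Let `0 = d_0 < d_1 < ⋯ < d_a < e` be the steps at which the walk `θ_{e−a}, θ_{e−a} − 1, …`
meets some `θ_b` with `b ≥ e − a`, and put `d_{a+1} = e`. Then `φ^{j+1} ≡ φ^1 − d_j (mod e)`,
so row `j` (counted from `0`) has length `d_{j+1} − d_j`: the row lengths telescope to `e`,
and the rows cover the residue intervals `(φ^1 − d_{j+1}, φ^1 − d_j]`, which tile one period
of `ℤ/e`. Since the walk visits each residue once, there are as many rows as such `θ_b`,
namely `a + 1`.
-/

/-- The positive root `α(t,L)` of affine type `A_{e-1}^{(1)}`. -/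
def alphaRoot (e : ℕ) (t : ℤ) (L : ℕ) : ZMod e → ℤ := fun j =>
  (((Finset.range L).filter (fun k : ℕ => ((t + (k : ℤ) : ℤ) : ZMod e) = j)).card : ℤ)

/-- The null root `δ = α_0 + α_1 + ⋯ + α_{e-1}`. -/
def deltaRoot (e : ℕ) : ZMod e → ℤ := fun _ => 1

/-- The sequence `(φ_a^1, …, φ_a^{a+1})`: the subsequence of
`(θ_{e−a}, θ_{e−a}−1, …, θ_{e−a}−e+1)` (mod `e`) consisting of those residues equal
to some `θ_b` with `b ≥ e−a`. Here `θ` is a residue permutation, indexed by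
`[1,e]` with values in `[0,e−1]`. -/
def phiList (e : ℕ) (θ : ℕ → ℕ) (a : ℕ) : List ℕ :=
  ((List.range e).map (fun j => (θ (e - a) + e - j) % e)).filter
    (fun x => decide (x ∈ (Finset.Icc (e - a) e).image θ))

/-- `φ_a^{j+1}` (0-indexed access to `phiList`). -/
def phiIdx (e : ℕ) (θ : ℕ → ℕ) (a : ℕ) (j : ℕ) : ℕ :=
  (phiList e θ a).getD j 0

/-- The length of the `(i+1)`-st row (from the top) of the `(θ,a)`-ribbon:
`(φ^{i+1} − φ^{i+2}) mod e` taken in `[1,e]`, with cyclic convention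
`φ^{a+2} = φ^1`. -/
def rowLen (e : ℕ) (θ : ℕ → ℕ) (a : ℕ) (i : ℕ) : ℕ :=
  (phiIdx e θ a i + e - 1 - phiIdx e θ a ((i + 1) % (a + 1))) % e + 1

theorem mod_sub_add_one_eq_of_modEq {e x y T : ℕ} (hy : y < e) (hT : 0 < T) (hTe : T ≤ e)
    (h : x ≡ y + T [MOD e]) : (x + e - 1 - y) % e + 1 = T := by
  have h' : x + e - 1 - y + (y + 1) ≡ T - 1 + (y + 1) [MOD e] := by
    rw [show x + e - 1 - y + (y + 1) = x + e by omega, show T - 1 + (y + 1) = y + T by omega]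
    exact (Nat.add_modulus_modEq_iff.2 rfl).trans h
  rw [Nat.ModEq.add_right_cancel' _ h', Nat.mod_eq_of_lt (by omega)]
  omega

theorem add_sub_mod_add_modEq (s e j : ℕ) (hj : j ≤ e) : (s + e - j) % e + j ≡ s [MOD e] :=
  calc (s + e - j) % e + j ≡ s + e - j + j [MOD e] := (Nat.mod_modEq _ _).add_right _
    _ = s + e := by omega
    _ ≡ s [MOD e] := Nat.add_modulus_modEq_iff.2 rfl

theorem add_sub_mod_involutive (s e j : ℕ) (hj : j < e) :
    (s + e - (s + e - j) % e) % e = j := by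
  set y := (s + e - j) % e
  have hy : y < e := Nat.mod_lt _ (by omega)
  have h : s + e - y + y ≡ j + y [MOD e] :=
    calc s + e - y + y = s + e := by omega
      _ ≡ s [MOD e] := Nat.add_modulus_modEq_iff.2 rfl
      _ ≡ y + j [MOD e] := (add_sub_mod_add_modEq s e j hj.le).symm
      _ = j + y := add_comm _ _
  exact Eq.trans (Nat.ModEq.add_right_cancel' y h) (Nat.mod_eq_of_lt hj)

namespace List

theorem getD_lt_getD_succ {l : List ℕ} {b i : ℕ} (hl : l.Pairwise (· < ·))
    (hb : ∀ x ∈ l, x < b) (hi : i < l.length) : l.getD i b < l.getD (i + 1) b := by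
  rw [l.getD_eq_getElem b hi]
  by_cases hi' : i + 1 < l.length
  · rw [l.getD_eq_getElem b hi']
    exact List.pairwise_iff_getElem.1 hl i (i + 1) hi hi' (Nat.lt_succ_self i)
  · rw [l.getD_eq_default b (by omega)]
    exact hb _ (l.getElem_mem hi)

theorem monotone_getD {l : List ℕ} {b : ℕ} (hl : l.Pairwise (· < ·)) (hb : ∀ x ∈ l, x < b) :
    Monotone (l.getD · b) := by
  refine monotone_nat_of_le_succ fun i => ?_
  by_cases hi : i < l.length
  · exact (getD_lt_getD_succ hl hb hi).le
  · simp only [l.getD_eq_default b (by omega : l.length ≤ i),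
      l.getD_eq_default b (by omega : l.length ≤ i + 1), le_refl]

end List

theorem alphaRoot_apply (e : ℕ) (t : ℤ) (L : ℕ) (j : ZMod e) :
    alphaRoot e t L j = ∑ k ∈ Finset.range L, if ((t + k : ℤ) : ZMod e) = j then 1 else 0 := by
  rw [alphaRoot, Finset.sum_boole]

theorem alphaRoot_congr {e : ℕ} {t t' : ℤ} (h : (t : ZMod e) = t') (L : ℕ) :
    alphaRoot e t L = alphaRoot e t' L := by
  funext j
  simp only [alphaRoot_apply, Int.cast_add, h]

theorem alphaRoot_add (e : ℕ) (t : ℤ) (L L' : ℕ) :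
    alphaRoot e t (L + L') = alphaRoot e t L + alphaRoot e (t + L) L' := by
  funext j
  simp only [alphaRoot_apply, Finset.sum_range_add, Pi.add_apply, Nat.cast_add, add_assoc]

theorem alphaRoot_self (e : ℕ) [NeZero e] (t : ℤ) : alphaRoot e t e = deltaRoot e := by
  funext j
  rw [alphaRoot, deltaRoot, Nat.cast_eq_one, Finset.card_eq_one]
  refine ⟨(j - t).val, Finset.ext fun k => ?_⟩
  simp only [Finset.mem_filter, Finset.mem_range, Finset.mem_singleton, Int.cast_add,
    Int.cast_natCast]
  constructor
  · rintro ⟨hk, hj⟩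
    rw [← hj, add_sub_cancel_left, ZMod.val_natCast_of_lt hk]
  · rintro rfl
    exact ⟨ZMod.val_lt _, by rw [ZMod.natCast_zmod_val, add_sub_cancel]⟩

theorem sum_alphaRoot_telescope (e : ℕ) (t : ℤ) {c : ℕ → ℕ} (hc : Monotone c) (n : ℕ) :
    ∑ i ∈ Finset.range n, alphaRoot e (t - c (i + 1)) (c (i + 1) - c i) =
      alphaRoot e (t - c n) (c n - c 0) := by
  induction n with
  | zero => funext j; simp [alphaRoot]
  | succ n ih =>
    have hn : c 0 ≤ c n := hc (Nat.zero_le n)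
    have hn1 : c n ≤ c (n + 1) := hc (Nat.le_succ n)
    rw [Finset.sum_range_succ, ih, add_comm,
      show c (n + 1) - c 0 = (c (n + 1) - c n) + (c n - c 0) by omega, alphaRoot_add]
    congr 2
    push_cast [Nat.cast_sub hn1]
    ring

def phiPos (e : ℕ) (θ : ℕ → ℕ) (a : ℕ) : List ℕ :=
  (List.range e).filter
    (fun j => decide ((θ (e - a) + e - j) % e ∈ (Finset.Icc (e - a) e).image θ))

/-- The offset `d_i` of the walk (`φ^{i+1} ≡ φ^1 − d_i`); the default `e` encodes the
convention `φ^{a+2} = φ^1`. -/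
def phiDist (e : ℕ) (θ : ℕ → ℕ) (a : ℕ) (i : ℕ) : ℕ :=
  (phiPos e θ a).getD i e

section Ribbon

variable {e : ℕ} {θ : ℕ → ℕ} {a : ℕ}

theorem phiList_eq_map :
    phiList e θ a = (phiPos e θ a).map (fun j => (θ (e - a) + e - j) % e) := by
  rw [phiList, phiPos, List.filter_map]
  rfl

theorem phiPos_pairwise : (phiPos e θ a).Pairwise (· < ·) :=
  List.pairwise_lt_range.filter _

theorem lt_of_mem_phiPos {j : ℕ} (hj : j ∈ phiPos e θ a) : j < e :=
  List.mem_range.1 (List.mem_of_mem_filter hj)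

theorem phiPos_length (hθ : Set.BijOn θ (Set.Icc 1 e) (Set.Iio e)) (ha : a < e) :
    (phiPos e θ a).length = a + 1 := by
  set s := θ (e - a)
  set S := (Finset.Icc (e - a) e).image θ
  have hS : ∀ x ∈ S, x < e := by
    simp only [S, Finset.mem_image, Finset.mem_Icc]
    rintro _ ⟨b, hb, rfl⟩
    exact hθ.mapsTo ⟨by omega, hb.2⟩
  calc (phiPos e θ a).length
      = ((Finset.range e).filter (fun j => (s + e - j) % e ∈ S)).card := by
        rw [phiPos, ← List.toFinset_card_of_nodup (List.nodup_range.filter _),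
          List.toFinset_filter, List.toFinset_range]
        simp only [decide_eq_true_eq, S, s]
    _ = S.card := by
        refine Finset.card_nbij' (fun j => (s + e - j) % e) (fun j => (s + e - j) % e)
          (fun j hj => (Finset.mem_filter.1 hj).2) (fun x hx => ?_)
          (fun j hj => add_sub_mod_involutive s e j (Finset.mem_range.1 (Finset.mem_filter.1 hj).1))
          (fun x hx => add_sub_mod_involutive s e x (hS x hx))
        rw [Finset.mem_coe, Finset.mem_filter, Finset.mem_range]
        exact ⟨Nat.mod_lt _ (by omega), by rwa [add_sub_mod_involutive s e x (hS x hx)]⟩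
    _ = a + 1 := by
        rw [Finset.card_image_of_injOn, Nat.card_Icc]
        · omega
        · exact hθ.injOn.mono fun b hb => by
            simp only [Finset.coe_Icc, Set.mem_Icc] at hb ⊢
            omega

theorem phiList_length (hθ : Set.BijOn θ (Set.Icc 1 e) (Set.Iio e)) (ha : a < e) :
    (phiList e θ a).length = a + 1 := by
  rw [phiList_eq_map, List.length_map, phiPos_length hθ ha]

theorem phiDist_monotone : Monotone (phiDist e θ a) :=
  List.monotone_getD phiPos_pairwise fun _ => lt_of_mem_phiPos

theorem phiDist_lt_succ (hθ : Set.BijOn θ (Set.Icc 1 e) (Set.Iio e)) (ha : a < e) {i : ℕ}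
    (hi : i ≤ a) : phiDist e θ a i < phiDist e θ a (i + 1) :=
  List.getD_lt_getD_succ phiPos_pairwise (fun _ => lt_of_mem_phiPos)
    (by rw [phiPos_length hθ ha]; omega)

theorem phiDist_zero (hθ : Set.BijOn θ (Set.Icc 1 e) (Set.Iio e)) (ha : a < e) :
    phiDist e θ a 0 = 0 := by
  obtain ⟨n, rfl⟩ : ∃ n, e = n + 1 := ⟨e - 1, by omega⟩
  have hs : θ (n + 1 - a) < n + 1 := hθ.mapsTo ⟨by omega, by omega⟩
  rw [phiDist, phiPos, List.range_succ_eq_map, List.filter_cons_of_pos]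
  · rfl
  · simp only [Nat.sub_zero, Nat.add_mod_right, Nat.mod_eq_of_lt hs, decide_eq_true_eq]
    exact Finset.mem_image_of_mem θ (Finset.mem_Icc.2 ⟨le_rfl, by omega⟩)

theorem phiDist_succ_self (hθ : Set.BijOn θ (Set.Icc 1 e) (Set.Iio e)) (ha : a < e) :
    phiDist e θ a (a + 1) = e :=
  List.getD_eq_default _ _ (phiPos_length hθ ha).le

theorem phiIdx_lt (ha : a < e) (i : ℕ) : phiIdx e θ a i < e := by
  rw [phiIdx]
  by_cases hi : i < (phiList e θ a).length
  · rw [List.getD_eq_getElem _ _ hi]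
    simp only [phiList_eq_map, List.getElem_map]
    exact Nat.mod_lt _ (by omega)
  · rw [List.getD_eq_default _ _ (by omega)]
    omega

theorem phiIdx_add_phiDist_modEq (hθ : Set.BijOn θ (Set.Icc 1 e) (Set.Iio e))
    (ha : a < e) {i : ℕ} (hi : i ≤ a) :
    phiIdx e θ a i + phiDist e θ a i ≡ θ (e - a) [MOD e] := by
  have hl : i < (phiPos e θ a).length := by rw [phiPos_length hθ ha]; omega
  rw [phiIdx, phiDist, phiList_eq_map, List.getD_eq_getElem _ _ (by rwa [List.length_map]),
    List.getElem_map, List.getD_eq_getElem _ _ hl]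
  exact add_sub_mod_add_modEq _ _ _ (lt_of_mem_phiPos (List.getElem_mem hl)).le

theorem phiIdx_mod_add_phiDist_modEq (hθ : Set.BijOn θ (Set.Icc 1 e) (Set.Iio e))
    (ha : a < e) {i : ℕ} (hi : i ≤ a + 1) :
    phiIdx e θ a (i % (a + 1)) + phiDist e θ a i ≡ θ (e - a) [MOD e] := by
  rcases hi.lt_or_eq with hi | rfl
  · rw [Nat.mod_eq_of_lt hi]
    exact phiIdx_add_phiDist_modEq hθ ha (by omega)
  · have h0 := phiIdx_add_phiDist_modEq hθ ha (Nat.zero_le a)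
    rw [phiDist_zero hθ ha] at h0
    rw [Nat.mod_self, phiDist_succ_self hθ ha]
    exact (Nat.add_modulus_modEq_iff.2 rfl).trans h0

theorem rowLen_eq (hθ : Set.BijOn θ (Set.Icc 1 e) (Set.Iio e)) (ha : a < e) {i : ℕ}
    (hi : i ≤ a) : rowLen e θ a i = phiDist e θ a (i + 1) - phiDist e θ a i := by
  have hlt := phiDist_lt_succ hθ ha hi
  have hle : phiDist e θ a (i + 1) ≤ e :=
    (phiDist_monotone (by omega : i + 1 ≤ a + 1)).trans_eq (phiDist_succ_self hθ ha)
  have hx := phiIdx_mod_add_phiDist_modEq hθ ha (i := i) (by omega)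
  have hy := phiIdx_mod_add_phiDist_modEq hθ ha (i := i + 1) (by omega)
  rw [Nat.mod_eq_of_lt (by omega : i < a + 1)] at hx
  refine mod_sub_add_one_eq_of_modEq (phiIdx_lt ha _) (by omega) (by omega) ?_
  refine Nat.ModEq.add_right_cancel' (phiDist e θ a i) (hx.trans ?_)
  rw [show phiIdx e θ a ((i + 1) % (a + 1)) + (phiDist e θ a (i + 1) - phiDist e θ a i)
    + phiDist e θ a i = phiIdx e θ a ((i + 1) % (a + 1)) + phiDist e θ a (i + 1) by omega]
  exact hy.symm

theorem sum_rowLen (hθ : Set.BijOn θ (Set.Icc 1 e) (Set.Iio e)) (ha : a < e) :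
    ∑ i ∈ Finset.range (a + 1), rowLen e θ a i = e := by
  rw [Finset.sum_congr rfl fun i hi => rowLen_eq hθ ha (Nat.lt_succ_iff.1 (Finset.mem_range.1 hi)),
    Finset.sum_range_tsub phiDist_monotone, phiDist_succ_self hθ ha, phiDist_zero hθ ha,
    Nat.sub_zero]

theorem phiIdx_succ_add_one_cast (hθ : Set.BijOn θ (Set.Icc 1 e) (Set.Iio e)) (ha : a < e)
    {i : ℕ} (hi : i ≤ a) :
    (((phiIdx e θ a ((i + 1) % (a + 1)) : ℤ) + 1 : ℤ) : ZMod e) =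
      (((θ (e - a) : ℤ) + 1 - phiDist e θ a (i + 1) : ℤ) : ZMod e) := by
  have h := (ZMod.natCast_eq_natCast_iff _ _ e).2
    (phiIdx_mod_add_phiDist_modEq hθ ha (i := i + 1) (by omega))
  push_cast at h ⊢
  linear_combination h

theorem sum_alphaRoot_rowLen (hθ : Set.BijOn θ (Set.Icc 1 e) (Set.Iio e)) (ha : a < e) :
    ∑ i ∈ Finset.range (a + 1),
        alphaRoot e ((phiIdx e θ a ((i + 1) % (a + 1)) : ℤ) + 1) (rowLen e θ a i) =
      deltaRoot e := by
  have : NeZero e := ⟨by omega⟩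
  calc ∑ i ∈ Finset.range (a + 1),
        alphaRoot e ((phiIdx e θ a ((i + 1) % (a + 1)) : ℤ) + 1) (rowLen e θ a i)
      = ∑ i ∈ Finset.range (a + 1), alphaRoot e ((θ (e - a) : ℤ) + 1 - phiDist e θ a (i + 1))
          (phiDist e θ a (i + 1) - phiDist e θ a i) := by
        refine Finset.sum_congr rfl fun i hi => ?_
        have hi := Nat.lt_succ_iff.1 (Finset.mem_range.1 hi)
        rw [rowLen_eq hθ ha hi, alphaRoot_congr (phiIdx_succ_add_one_cast hθ ha hi)]
    _ = alphaRoot e ((θ (e - a) : ℤ) + 1 - e) e := by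
        rw [sum_alphaRoot_telescope _ _ phiDist_monotone, phiDist_succ_self hθ ha,
          phiDist_zero hθ ha, Nat.sub_zero]
    _ = deltaRoot e := alphaRoot_self e _

end Ribbon

theorem statement17_general (e : ℕ) (θ : ℕ → ℕ)
    (hθ : Set.BijOn θ (Set.Icc 1 e) (Set.Iio e)) (a : ℕ) (ha : a < e) :
    ((phiList e θ a).length = a + 1) ∧
    ((∑ i ∈ Finset.range (a + 1), rowLen e θ a i) = e) ∧
    ((∑ i ∈ Finset.range (a + 1),
        alphaRoot e ((phiIdx e θ a ((i + 1) % (a + 1)) : ℤ) + 1) (rowLen e θ a i)) =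
      deltaRoot e) ∧
    (∀ a' : ℕ, a' < e → a ≠ a' →
      (phiList e θ a).length ≠ (phiList e θ a').length) := by
  refine ⟨phiList_length hθ ha, sum_rowLen hθ ha, sum_alphaRoot_rowLen hθ ha,
    fun a' ha' hne => ?_⟩
  rw [phiList_length hθ ha, phiList_length hθ ha']
  omega

/-- The `(θ,a)`-ribbon has `a+1` rows (row `j` consisting of the consecutive
residues `φ^{j+1}+1, …, φ^j`), exactly `e` nodes in total, content `δ`, and the
`(θ,a)`-ribbons for distinct `a` have distinct numbers of rows. -/
theorem statement17 (e : ℕ) (he : 1 < e) (θ : ℕ → ℕ)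
    (hθ : Set.BijOn θ (Set.Icc 1 e) (Set.Iio e)) (a : ℕ) (ha : a < e) :
    ((phiList e θ a).length = a + 1) ∧
    ((∑ i ∈ Finset.range (a + 1), rowLen e θ a i) = e) ∧
    ((∑ i ∈ Finset.range (a + 1),
        alphaRoot e ((phiIdx e θ a ((i + 1) % (a + 1)) : ℤ) + 1) (rowLen e θ a i)) =
      deltaRoot e) ∧
    (∀ a' : ℕ, a' < e → a ≠ a' →
      (phiList e θ a).length ≠ (phiList e θ a').length) :=
  statement17_general e θ hθ a ha
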